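/- There exists N₀ ≥ 7 such that for every integer N ≥ N₀ the following holds: γ₁(1/2) > 0 and γ₁'(1/2) + 2·α(1/2)·τ'(1/2) < 0, where α(t) = −τ(t) + √(τ(t)² + γ₁(t)), γ₁' denotes the derivative of γ₁, and τ'(1/2) = −(N−2)·2^{N−1} is the derivative of τ at 1/2. -/

import Mathlib

open Real Filter Set

/-- `τ(t) = t^{-(N-2)} − 1`. -/
noncomputable def tau (N : ℕ) (t : ℝ) : ℝ := t ^ (-((N : ℝ) - 2)) - 1

/-- `γ₁(t) = (1−t²)^{-(N−2)} − 2·(√3·t)^{-(N−2)} + 2·(t⁴+t²+1)^{-(N−2)/2}`. -/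
noncomputable def gamma1 (N : ℕ) (t : ℝ) : ℝ :=
  (1 - t ^ 2) ^ (-((N : ℝ) - 2)) - 2 * (Real.sqrt 3 * t) ^ (-((N : ℝ) - 2)) +
    2 * (t ^ 4 + t ^ 2 + 1) ^ (-((N : ℝ) - 2) / 2)

/-- `α(t) = −τ(t) + √(τ(t)² + γ₁(t))`. -/
noncomputable def alphaF (N : ℕ) (t : ℝ) : ℝ :=
  -tau N t + Real.sqrt ((tau N t) ^ 2 + gamma1 N t)

lemma neg_rpow_inv' {x : ℝ} (hx : 0 ≤ x) (y : ℝ) : x ^ (-y) = (x⁻¹) ^ y := by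
  rw [Real.rpow_neg hx, ← Real.inv_rpow hx]

lemma sqrt3_half_rpow (m : ℝ) :
    (Real.sqrt 3 * (1/2)) ^ (-m) = ((4:ℝ)/3) ^ (m/2) := by
  have h4 : Real.sqrt 4 = 2 := by
    rw [show (4:ℝ) = 2^2 by norm_num, Real.sqrt_sq (by norm_num)]
  have hs : Real.sqrt 3 * (1/2) = ((3:ℝ)/4) ^ ((1:ℝ)/2) := by
    rw [← Real.sqrt_eq_rpow, Real.sqrt_div (by norm_num : (0:ℝ) ≤ 3) 4, h4]; ring
  rw [hs, ← Real.rpow_mul (by norm_num : (0:ℝ) ≤ 3/4),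
    show (1:ℝ)/2 * (-m) = -(m/2) by ring, neg_rpow_inv' (by norm_num)]
  norm_num

lemma four_thirds_sq (m : ℝ) : ((4:ℝ)/3) ^ m = (((4:ℝ)/3) ^ (m/2)) ^ 2 := by
  rw [← Real.rpow_natCast (((4:ℝ)/3) ^ (m/2)) 2,
    ← Real.rpow_mul (by norm_num : (0:ℝ) ≤ 4/3)]
  congr 1; push_cast; ring

set_option maxHeartbeats 2000000 in
theorem stmt_3 : ∃ N0 : ℕ, 7 ≤ N0 ∧ ∀ N : ℕ, N0 ≤ N →
    0 < gamma1 N (1 / 2) ∧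
    deriv (gamma1 N) (1 / 2) +
      2 * alphaF N (1 / 2) * (-((N : ℝ) - 2) * 2 ^ ((N : ℝ) - 1)) < 0 := by
  refine ⟨30, by norm_num, fun N hN => ?_⟩
  have hNr : (30:ℝ) ≤ (N:ℝ) := by exact_mod_cast hN
  obtain ⟨m, hm⟩ : ∃ m : ℝ, m = (N:ℝ) - 2 := ⟨_, rfl⟩
  have hm28 : (28:ℝ) ≤ m := by rw [hm]; linarith
  obtain ⟨b, hbdef⟩ : ∃ b : ℝ, b = ((4:ℝ)/3) ^ (m/2) := ⟨_, rfl⟩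
  obtain ⟨e, hedef⟩ : ∃ e : ℝ, e = (2:ℝ) ^ m := ⟨_, rfl⟩
  obtain ⟨c, hcdef⟩ : ∃ c : ℝ, c = ((21:ℝ)/16) ^ (-m/2) := ⟨_, rfl⟩
  obtain ⟨q, hqdef⟩ : ∃ q : ℝ, q = ((21:ℝ)/16) ^ (-m/2 - 1) := ⟨_, rfl⟩
  have hb_pos : 0 < b := hbdef ▸ Real.rpow_pos_of_pos (by norm_num) _
  have he_pos : 0 < e := hedef ▸ Real.rpow_pos_of_pos (by norm_num) _
  have hc_pos : 0 < c := hcdef ▸ Real.rpow_pos_of_pos (by norm_num) _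
  have hq_pos : 0 < q := hqdef ▸ Real.rpow_pos_of_pos (by norm_num) _
  -- basic value computations
  have hb2 : ((4:ℝ)/3) ^ m = b ^ 2 := by rw [hbdef]; exact four_thirds_sq m
  have key1 : ((3:ℝ)/4) ^ (-m) = b ^ 2 := by
    rw [neg_rpow_inv' (by norm_num)]; norm_num [hb2]
  have key2 : (Real.sqrt 3 * (1/2)) ^ (-m) = b := by
    rw [hbdef]; exact sqrt3_half_rpow m
  have key3 : ((1:ℝ)/2) ^ (-m) = e := by
    rw [neg_rpow_inv' (by norm_num), hedef]; norm_num
  -- value of gamma1 at 1/2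
  have hgval : gamma1 N (1/2) = b ^ 2 - 2 * b + 2 * c := by
    unfold gamma1
    rw [← hm, show (1 - (1/2:ℝ)^2) = 3/4 by norm_num,
      show ((1/2:ℝ)^4 + (1/2:ℝ)^2 + 1) = 21/16 by norm_num, key1, key2, hcdef]
  -- value of tau at 1/2
  have htauval : tau N (1/2) = e - 1 := by
    unfold tau
    rw [← hm, key3]
  -- bounds
  have hb20 : (20:ℝ) ≤ b := by
    have h14 : ((4:ℝ)/3) ^ (14:ℝ) ≤ ((4:ℝ)/3) ^ (m/2) :=
      (Real.rpow_le_rpow_left_iff (by norm_num : (1:ℝ) < 4/3)).mpr (by linarith)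
    have h20 : (20:ℝ) ≤ ((4:ℝ)/3) ^ (14:ℝ) := by
      rw [show (14:ℝ) = ((14:ℕ):ℝ) by norm_num, Real.rpow_natCast]
      norm_num
    rw [hbdef]; linarith
  have hbb : b ^ 2 = b * b := sq b
  have hbb20 : b * 20 ≤ b * b := mul_le_mul_of_nonneg_left hb20 hb_pos.le
  have he2 : (2:ℝ) ≤ e := by
    have h1 : (2:ℝ) ^ (1:ℝ) ≤ (2:ℝ) ^ m :=
      (Real.rpow_le_rpow_left_iff (by norm_num : (1:ℝ) < 2)).mpr (by linarith)
    rw [Real.rpow_one] at h1; rw [hedef]; exact h1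
  have hbe : b ^ 2 ≤ e := by
    rw [← hb2, hedef]
    exact Real.rpow_le_rpow (by norm_num) (by norm_num) (by linarith)
  have hc1 : c ≤ 1 := by
    rw [hcdef]
    exact Real.rpow_le_one_of_one_le_of_nonpos (by norm_num) (by linarith)
  have hg_pos : 0 < gamma1 N (1/2) := by
    rw [hgval]; linarith [hbb, hbb20, hc_pos, hb20]
  refine ⟨hg_pos, ?_⟩
  -- derivative of gamma1 at 1/2
  have h1 : HasDerivAt (fun t : ℝ => 1 - t ^ 2) (-1 : ℝ) (1/2) := by
    have h := (hasDerivAt_pow 2 (1/2:ℝ)).const_sub 1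
    norm_num at h; exact h
  have h2 : HasDerivAt (fun t : ℝ => Real.sqrt 3 * t) (Real.sqrt 3) (1/2) := by
    simpa using (hasDerivAt_id (1/2:ℝ)).const_mul (Real.sqrt 3)
  have h3 : HasDerivAt (fun t : ℝ => t ^ 4 + t ^ 2 + 1) (3/2 : ℝ) (1/2) := by
    have h := ((hasDerivAt_pow 4 (1/2:ℝ)).add (hasDerivAt_pow 2 (1/2:ℝ))).add_const 1
    norm_num at h ⊢; exact h
  have hs3pos : 0 < Real.sqrt 3 := Real.sqrt_pos.mpr (by norm_num)
  have h1r := h1.rpow_const (p := -m) (Or.inl (by norm_num : (1 - (1/2:ℝ)^2) ≠ 0))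
  have h2r := h2.rpow_const (p := -m)
    (Or.inl (by positivity : (Real.sqrt 3 * (1/2:ℝ)) ≠ 0))
  have h3r := h3.rpow_const (p := -m/2)
    (Or.inl (by norm_num : ((1/2:ℝ)^4 + (1/2:ℝ)^2 + 1) ≠ 0))
  have hD : HasDerivAt (gamma1 N)
      ((-1) * (-m) * (1 - (1/2:ℝ)^2) ^ (-m - 1)
        - 2 * (Real.sqrt 3 * (-m) * (Real.sqrt 3 * (1/2)) ^ (-m - 1))
        + 2 * ((3/2) * (-m/2) * ((1/2:ℝ)^4 + (1/2:ℝ)^2 + 1) ^ (-m/2 - 1))) (1/2) := by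
    have hcomb := (h1r.sub (h2r.const_mul 2)).add (h3r.const_mul 2)
    unfold gamma1
    rw [← hm]
    exact hcomb
  have hderiv := hD.deriv
  -- simplify the derivative value
  have hterm1 : (1 - (1/2:ℝ)^2) ^ (-m - 1) = b ^ 2 * (4/3) := by
    rw [show (1 - (1/2:ℝ)^2) = 3/4 by norm_num, show -m - 1 = -(m+1) by ring,
      neg_rpow_inv' (by norm_num)]
    norm_num
    rw [Real.rpow_add (by norm_num : (0:ℝ) < 4/3), Real.rpow_one, hb2]
  have hterm2 : (Real.sqrt 3 * (1/2:ℝ)) ^ (-m - 1) = b * (Real.sqrt 3 * (1/2))⁻¹ := by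
    rw [show -m - 1 = -m + (-1) by ring,
      Real.rpow_add (by positivity : (0:ℝ) < Real.sqrt 3 * (1/2)), Real.rpow_neg_one, key2]
  have hterm3 : ((1/2:ℝ)^4 + (1/2:ℝ)^2 + 1) ^ (-m/2 - 1) = q := by
    rw [show ((1/2:ℝ)^4 + (1/2:ℝ)^2 + 1) = 21/16 by norm_num, hqdef]
  have hs3sq : Real.sqrt 3 ^ 2 = 3 := Real.sq_sqrt (by norm_num)
  have hs3ne : Real.sqrt 3 ≠ 0 := ne_of_gt hs3pos
  have hderiv' : deriv (gamma1 N) (1/2) = m * (4/3) * b ^ 2 + 4 * m * b - (3/2) * m * q := by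
    have hinv : Real.sqrt 3 * (Real.sqrt 3 * (1/2:ℝ))⁻¹ = 2 := by
      rw [mul_inv]
      field_simp
    rw [hderiv, hterm1, hterm2, hterm3,
      show Real.sqrt 3 * (-m) * (b * (Real.sqrt 3 * (1/2:ℝ))⁻¹)
        = -m * b * (Real.sqrt 3 * (Real.sqrt 3 * (1/2:ℝ))⁻¹) by ring, hinv]
    ring
  -- alphaF lower bound
  obtain ⟨g, hgdef⟩ : ∃ g : ℝ, g = b ^ 2 - 2 * b + 2 * c := ⟨_, rfl⟩
  have hg_pos' : 0 < g := by rw [hgdef]; linarith [hbb, hbb20, hc_pos, hb20]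
  have hg4e : g ≤ 4 * e := by rw [hgdef]; linarith [hbe, hc1, he2, hb_pos.le]
  have halpha : g / (2 * e) ≤ alphaF N (1/2) := by
    unfold alphaF
    rw [htauval, hgval, ← hgdef]
    have hd0 : 0 ≤ g / (2 * e) := by positivity
    have hdd : g / (2 * e) * (2 * e) = g := by field_simp
    have hd2 : g / (2 * e) ≤ 2 := by
      rw [div_le_iff₀ (by positivity : (0:ℝ) < 2 * e)]; linarith
    have hdsq : (g / (2 * e)) ^ 2 ≤ 2 * (g / (2 * e)) := by nlinarith [hd0, hd2]
    have hexpand : ((e - 1) + g / (2 * e)) ^ 2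
        = (e - 1) ^ 2 + (g / (2 * e) * (2 * e)) - 2 * (g / (2 * e))
          + (g / (2 * e)) ^ 2 := by ring
    have hsq : ((e - 1) + g / (2 * e)) ^ 2 ≤ (e - 1) ^ 2 + g := by
      rw [hexpand, hdd]; linarith
    have := Real.le_sqrt_of_sq_le hsq
    linarith
  -- final computation
  have hexp : (2:ℝ) ^ ((N:ℝ) - 1) = 2 * e := by
    rw [show (N:ℝ) - 1 = m + 1 by rw [hm]; ring,
      Real.rpow_add (by norm_num : (0:ℝ) < 2), Real.rpow_one, hedef]; ring
  have hm_pos : 0 < m := by linarith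
  have halphanonneg : 0 ≤ alphaF N (1/2) := le_trans (by positivity) halpha
  have hmain : 2 * alphaF N (1/2) * (-m * (2 * e)) ≤ -2 * m * g := by
    have h1' : g / (2 * e) * (4 * m * e) ≤ alphaF N (1/2) * (4 * m * e) :=
      mul_le_mul_of_nonneg_right halpha (by positivity)
    have h2' : g / (2 * e) * (4 * m * e) = 2 * m * g := by field_simp; ring
    linarith [h1', h2']
  have hgoal : deriv (gamma1 N) (1/2) + 2 * alphaF N (1/2) * (-m * (2 * e)) < 0 := by
    rw [hderiv']
    have hkey : m * (4/3) * b ^ 2 + 4 * m * b - (3/2) * m * q - 2 * m * g < 0 := by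
      have inner : -(2/3) * b ^ 2 + 8 * b - 4 * c - (3/2) * q < 0 := by
        linarith [hbb, hbb20, hc_pos, hq_pos, hb_pos]
      have hprod := mul_neg_of_pos_of_neg hm_pos inner
      rw [hgdef]; nlinarith [hprod]
    linarith
  rw [← hm, hexp]
  exact hgoal
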